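/- arXiv:2504.03371 — 2 statements merged into one kernel-verified Lean document; each statement's English description precedes it below -/
import Mathlib

section
/- Let K be a locally compact Hausdorff space and X a Banach space. If f ∈ C₀(K, X) is a smooth point, then M_f is a singleton {k₀} and f(k₀) is a smooth point of X. -/
/-!
Every norming functional `ψ` of `f k`, at a point `k` where `‖f k‖ = ‖f‖`, gives the norming
functional `ψ ∘ δ_k` of `f`, where `δ_k` is evaluation at `k`. By smoothness all of these coincide.
Urysohn bumps show that `ψ ∘ δ_k = ψ' ∘ δ_k'` forces `ψ' = 0` when `k ≠ k'`, so there is only one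
such point `k₀`, and that `ψ ↦ ψ ∘ δ_k₀` is injective, so `f k₀` has only one norming functional.
-/

open ZeroAtInfty Set Filter Topology

def IsNormingFunctional (𝕜 : Type*) {Y : Type*} [RCLike 𝕜] [NormedAddCommGroup Y]
    [NormedSpace 𝕜 Y] (y : Y) (φ : StrongDual 𝕜 Y) : Prop :=
  ‖φ‖ = 1 ∧ φ y = ‖y‖

section NormingFunctional

variable {𝕜 Y : Type*} [RCLike 𝕜] [NormedAddCommGroup Y] [NormedSpace 𝕜 Y]

theorem exists_isNormingFunctional {y : Y} (hy : y ≠ 0) : ∃ φ, IsNormingFunctional 𝕜 y φ :=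
  exists_dual_vector 𝕜 y (norm_ne_zero_iff.mpr hy)

theorem IsNormingFunctional.of_norm_le_one {y : Y} {φ : StrongDual 𝕜 Y} (hy : y ≠ 0)
    (hφ : ‖φ‖ ≤ 1) (hφy : φ y = ‖y‖) : IsNormingFunctional 𝕜 y φ := by
  refine ⟨le_antisymm hφ ?_, hφy⟩
  have hle : 1 * ‖y‖ ≤ ‖φ‖ * ‖y‖ := by
    simpa [hφy] using φ.le_opNorm y
  exact le_of_mul_le_mul_right hle (norm_pos_iff.mpr hy)

theorem IsNormingFunctional.ne_zero {y : Y} {φ : StrongDual 𝕜 Y}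
    (hφ : IsNormingFunctional 𝕜 y φ) : φ ≠ 0 := by
  rintro rfl
  simp [IsNormingFunctional] at hφ

end NormingFunctional

namespace ZeroAtInftyContinuousMap

variable {K X : Type*} [TopologicalSpace K] [NormedAddCommGroup X]

theorem norm_apply_le (f : C₀(K, X)) (k : K) : ‖f k‖ ≤ ‖f‖ := by
  rw [← norm_toBCF_eq_norm]
  exact f.toBCF.norm_coe_le_norm k

theorem exists_norm_apply_eq_norm {f : C₀(K, X)} (hf : f ≠ 0) : ∃ k, ‖f k‖ = ‖f‖ := by
  obtain ⟨k₁, hk₁⟩ := DFunLike.ne_iff.mp hf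
  have hlim : Tendsto (fun k => ‖f k‖) (cocompact K) (𝓝 0) := by
    simpa using (zero_at_infty f).norm
  obtain ⟨k₀, hk₀⟩ := (map_continuous f).norm.exists_forall_ge' k₁
    ((hlim.eventually_lt_const (norm_pos_iff.mpr hk₁)).mono fun _ => le_of_lt)
  refine ⟨k₀, le_antisymm (f.norm_apply_le k₀) ?_⟩
  rw [← norm_toBCF_eq_norm]
  exact (BoundedContinuousFunction.norm_le (norm_nonneg _)).mpr hk₀

theorem exists_apply_eq_and_eqOn_zero [RegularSpace K] [LocallyCompactSpace K]
    [NormedSpace ℝ X] (x : X) {k₀ : K} {s : Set K} (hs : IsClosed s) (hk₀ : k₀ ∉ s) :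
    ∃ h : C₀(K, X), h k₀ = x ∧ EqOn h 0 s := by
  obtain ⟨g, hg₁, hg₀, hgc, -⟩ := exists_continuous_one_zero_of_isCompact isCompact_singleton hs
    (disjoint_singleton_left.mpr hk₀)
  refine ⟨⟨⟨fun k => g k • x, g.continuous.smul continuous_const⟩,
    (hgc.smul_right (f' := fun _ => x)).is_zero_at_infty⟩, ?_, fun k hk => ?_⟩
  · simp [hg₁ (mem_singleton k₀)]
  · simp [hg₀ hk]

variable (𝕜 : Type*) [RCLike 𝕜] [NormedSpace 𝕜 X]

noncomputable def evalCLM (k : K) : C₀(K, X) →L[𝕜] X :=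
  LinearMap.mkContinuous
    { toFun := fun f => f k
      map_add' := fun _ _ => rfl
      map_smul' := fun _ _ => rfl } 1 (fun f => by simpa using f.norm_apply_le k)

variable {𝕜}

@[simp]
theorem evalCLM_apply (k : K) (f : C₀(K, X)) : evalCLM 𝕜 k f = f k := rfl

theorem norm_evalCLM_le (k : K) : ‖(evalCLM 𝕜 k : C₀(K, X) →L[𝕜] X)‖ ≤ 1 :=
  LinearMap.mkContinuous_norm_le _ zero_le_one _

theorem _root_.IsNormingFunctional.comp_evalCLM {f : C₀(K, X)} (hf : f ≠ 0) {k : K}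
    (hk : ‖f k‖ = ‖f‖) {ψ : StrongDual 𝕜 X} (hψ : IsNormingFunctional 𝕜 (f k) ψ) :
    IsNormingFunctional 𝕜 f (ψ.comp (evalCLM 𝕜 k)) := by
  refine .of_norm_le_one hf ?_ (by simp [hψ.2, hk])
  calc ‖ψ.comp (evalCLM 𝕜 k)‖ ≤ ‖ψ‖ * ‖evalCLM 𝕜 k‖ := ψ.opNorm_comp_le _
    _ ≤ 1 := by rw [hψ.1, one_mul]; exact norm_evalCLM_le k

variable {Y : Type*} [NormedAddCommGroup Y] [NormedSpace 𝕜 Y]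

theorem comp_evalCLM_injective [RegularSpace K] [LocallyCompactSpace K] (k : K) :
    Function.Injective fun ψ : X →L[𝕜] Y => ψ.comp (evalCLM 𝕜 k) := by
  let := NormedSpace.restrictScalars ℝ 𝕜 X
  intro ψ ψ' h
  ext x
  obtain ⟨f, hfk, -⟩ := exists_apply_eq_and_eqOn_zero x isClosed_empty (notMem_empty k)
  simpa [hfk] using congr($h f)

theorem eq_zero_of_comp_evalCLM_eq [T2Space K] [LocallyCompactSpace K] {k k' : K} (hne : k ≠ k')
    {ψ ψ' : X →L[𝕜] Y} (h : ψ.comp (evalCLM 𝕜 k) = ψ'.comp (evalCLM 𝕜 k')) : ψ' = 0 := by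
  let := NormedSpace.restrictScalars ℝ 𝕜 X
  ext x
  obtain ⟨f, hfk', hfk⟩ := exists_apply_eq_and_eqOn_zero x isClosed_singleton hne.symm
  simpa [hfk', hfk (mem_singleton k)] using congr($h f).symm

end ZeroAtInftyContinuousMap

open ZeroAtInftyContinuousMap

theorem smooth_point_C0KX_necessary_general {𝕜 K X : Type*} [RCLike 𝕜] [TopologicalSpace K]
    [LocallyCompactSpace K] [T2Space K]
    [NormedAddCommGroup X] [NormedSpace 𝕜 X]
    (f : C₀(K, X)) (hf : f ≠ 0)
    (hsmooth : ∃! φ : C₀(K, X) →L[𝕜] 𝕜, ‖φ‖ = 1 ∧ φ f = (‖f‖ : 𝕜)) :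
    ∃ k₀ : K, {k : K | ‖f k‖ = ‖f‖} = {k₀} ∧
      (∃! ψ : X →L[𝕜] 𝕜, ‖ψ‖ = 1 ∧ ψ (f k₀) = (‖f k₀‖ : 𝕜)) := by
  obtain ⟨k₀, hk₀⟩ := exists_norm_apply_eq_norm hf
  have hfk : ∀ k, ‖f k‖ = ‖f‖ → f k ≠ 0 := fun k hk h0 => hf (norm_eq_zero.mp (by simp_all))
  obtain ⟨ψ₀, hψ₀⟩ := exists_isNormingFunctional (𝕜 := 𝕜) (hfk k₀ hk₀)
  have hcomp : ∀ k (hk : ‖f k‖ = ‖f‖) (ψ : StrongDual 𝕜 X), IsNormingFunctional 𝕜 (f k) ψ →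
      ψ.comp (evalCLM 𝕜 k) = ψ₀.comp (evalCLM 𝕜 k₀) := fun k hk ψ hψ =>
    hsmooth.unique (hψ.comp_evalCLM hf hk) (hψ₀.comp_evalCLM hf hk₀)
  refine ⟨k₀, ?_, ψ₀, hψ₀, fun ψ hψ => comp_evalCLM_injective k₀ (hcomp k₀ hk₀ ψ hψ)⟩
  refine Subset.antisymm (fun k hk => ?_) (singleton_subset_iff.mpr hk₀)
  by_contra hne
  obtain ⟨ψ, hψ⟩ := exists_isNormingFunctional (𝕜 := 𝕜) (hfk k hk)
  exact hψ₀.ne_zero (eq_zero_of_comp_evalCLM_eq hne (hcomp k hk ψ hψ))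

/-- If `f ∈ C₀(K, X)` is a smooth point, then its norm-attaining set is a singleton `{k₀}`
and `f k₀` is a smooth point of `X`. -/
theorem smooth_point_C0KX_necessary {𝕜 K X : Type*} [RCLike 𝕜] [TopologicalSpace K]
    [LocallyCompactSpace K] [T2Space K]
    [NormedAddCommGroup X] [NormedSpace 𝕜 X] [CompleteSpace X]
    (f : C₀(K, X)) (hf : f ≠ 0)
    (hsmooth : ∃! φ : C₀(K, X) →L[𝕜] 𝕜, ‖φ‖ = 1 ∧ φ f = (‖f‖ : 𝕜)) :
    ∃ k₀ : K, {k : K | ‖f k‖ = ‖f‖} = {k₀} ∧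
      (∃! ψ : X →L[𝕜] 𝕜, ‖ψ‖ = 1 ∧ ψ (f k₀) = (‖f k₀‖ : 𝕜)) :=
  smooth_point_C0KX_necessary_general f hf hsmooth
end

section
/- Let c₀₀ be the space of eventually zero real sequences with the sup norm, and K a compact Hausdorff space. Then C(K, c₀₀) has no nonzero right symmetric points: for any nonzero f ∈ C(K, c₀₀) there exists g ∈ C(K, c₀₀) with g ⊥_B f and f not ⊥_B g. -/
/-!
Let `M = ‖f‖`. The range of `f` is compact in `c₀₀`, hence lies within `M / 4` of finitely many
finitely supported sequences; so some coordinate `n` is smaller than `M / 4` on all of `f(K)` and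
vanishes at a chosen `f k₀`. Let `g` be `f` with its `n`-th coordinate replaced by the constant `M`.
Then `‖g‖ = M` and the functional `h ↦ (h k₀)ₙ` norms `g` and kills `f`, so `g ⊥_B f`; but
`‖f - g / 2‖ ≤ 3M / 4 < ‖f‖`, so `f` is not Birkhoff orthogonal to `g`.
-/

set_option synthInstance.maxHeartbeats 1000000

noncomputable def c00 : Submodule ℝ (lp (fun _ : ℕ => ℝ) ⊤) where
  carrier := {f | (Function.support fun n => (f : ∀ _ : ℕ, ℝ) n).Finite}
  add_mem' := by
    intro a b ha hb
    refine Set.Finite.subset (ha.union hb) ?_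
    intro n hn
    simp only [Function.mem_support, lp.coeFn_add, Pi.add_apply] at hn
    by_contra h
    simp only [Set.mem_union, Function.mem_support, not_or, not_not] at h
    simp [h.1, h.2] at hn
  zero_mem' := by
    simp only [Set.mem_setOf_eq]
    convert Set.finite_empty
    ext n
    simp [lp.coeFn_zero]
  smul_mem' := by
    intro c a ha
    refine Set.Finite.subset ha ?_
    intro n hn
    simp only [Function.mem_support, lp.coeFn_smul, Pi.smul_apply, smul_eq_mul] at hn
    simp only [Function.mem_support]
    intro h
    simp [h] at hn

def BirkhoffOrthogonal {E : Type*} [SeminormedAddCommGroup E] [Module ℝ E] (x y : E) : Prop :=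
  ∀ t : ℝ, ‖x‖ ≤ ‖x + t • y‖

theorem BirkhoffOrthogonal.of_linearMap {E : Type*} [SeminormedAddCommGroup E] [Module ℝ E]
    {x y : E} (φ : E →ₗ[ℝ] ℝ) (hφ : ∀ z, φ z ≤ ‖z‖) (hx : ‖x‖ ≤ φ x) (hy : φ y = 0) :
    BirkhoffOrthogonal x y := fun t =>
  calc ‖x‖ ≤ φ x := hx
    _ = φ (x + t • y) := by simp [hy]
    _ ≤ ‖x + t • y‖ := hφ _

namespace c00

noncomputable def coord (n : ℕ) : c00 →L[ℝ] ℝ :=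
  (lp.evalCLM ℝ (fun _ : ℕ => ℝ) ⊤ n).comp c00.subtypeL

theorem abs_coord_le_norm (n : ℕ) (x : c00) : |coord n x| ≤ ‖x‖ :=
  lp.norm_apply_le_norm ENNReal.top_ne_zero (x : lp (fun _ : ℕ => ℝ) ⊤) n

theorem norm_le_of_forall_abs_coord_le {x : c00} {C : ℝ} (hC : 0 ≤ C)
    (h : ∀ n, |coord n x| ≤ C) : ‖x‖ ≤ C :=
  lp.norm_le_of_forall_le hC h

theorem finite_support_coord (x : c00) : (Function.support fun n => coord n x).Finite := x.2

noncomputable def single (n : ℕ) : c00 :=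
  ⟨lp.single ⊤ n 1, (Set.finite_singleton n).subset fun _ hm =>
    by_contra fun h => hm (lp.single_apply_ne ⊤ n 1 h)⟩

theorem coord_single_self (n : ℕ) : coord n (single n) = 1 := lp.single_apply_self ⊤ n 1

theorem coord_single_of_ne {m n : ℕ} (h : m ≠ n) : coord m (single n) = 0 :=
  lp.single_apply_ne ⊤ n 1 h

noncomputable def setCoord (n : ℕ) (a : ℝ) : C(c00, c00) where
  toFun x := x + (a - coord n x) • single n
  continuous_toFun := by fun_prop

theorem coord_setCoord_self (n : ℕ) (a : ℝ) (x : c00) : coord n (setCoord n a x) = a := by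
  simp [setCoord, coord_single_self]

theorem coord_setCoord_of_ne {m n : ℕ} (h : m ≠ n) (a : ℝ) (x : c00) :
    coord m (setCoord n a x) = coord m x := by
  simp [setCoord, coord_single_of_ne h]

theorem norm_setCoord_le {n : ℕ} {a : ℝ} {x : c00} (hx : ‖x‖ ≤ a) : ‖setCoord n a x‖ ≤ a := by
  have ha : 0 ≤ a := (norm_nonneg x).trans hx
  refine norm_le_of_forall_abs_coord_le ha fun m => ?_
  rcases eq_or_ne m n with rfl | hm
  · rw [coord_setCoord_self, abs_of_nonneg ha]
  · exact coord_setCoord_of_ne hm a x ▸ (abs_coord_le_norm m x).trans hx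

theorem norm_add_neg_half_smul_setCoord_le {n : ℕ} {a : ℝ} {x : c00} (hx : ‖x‖ ≤ a)
    (hxn : |coord n x| ≤ a / 4) : ‖x + (-1 / 2 : ℝ) • setCoord n a x‖ ≤ 3 / 4 * a := by
  have ha : 0 ≤ a := (norm_nonneg x).trans hx
  refine norm_le_of_forall_abs_coord_le (by positivity) fun m => ?_
  rw [map_add, map_smul, smul_eq_mul]
  rcases eq_or_ne m n with rfl | hm
  · rw [coord_setCoord_self, abs_le]
    rw [abs_le] at hxn
    constructor <;> linarith [hxn.1, hxn.2]
  · rw [coord_setCoord_of_ne hm]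
    have hxm := abs_le.mp ((abs_coord_le_norm m x).trans hx)
    rw [abs_le]
    constructor <;> linarith [hxm.1, hxm.2]

theorem exists_coord_eq_zero_and_abs_coord_lt {S : Set c00} (hS : TotallyBounded S)
    (x₀ : c00) {ε : ℝ} (hε : 0 < ε) : ∃ n, coord n x₀ = 0 ∧ ∀ x ∈ S, |coord n x| < ε := by
  obtain ⟨t, -, ht, hSt⟩ := Metric.finite_approx_of_totallyBounded hS ε hε
  have hsupp : (⋃ y ∈ insert x₀ t, Function.support fun n => coord n y).Finite :=
    (ht.insert x₀).biUnion fun y _ => finite_support_coord y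
  obtain ⟨n, hn⟩ := hsupp.infinite_compl.nonempty
  simp only [Set.mem_compl_iff, Set.mem_iUnion, Function.mem_support, not_exists,
    not_not] at hn
  refine ⟨n, hn x₀ (Set.mem_insert x₀ t), fun x hx => ?_⟩
  obtain ⟨y, hy, hxy⟩ := Set.mem_iUnion₂.mp (hSt hx)
  calc |coord n x| = |coord n (x - y)| := by
        rw [map_sub, hn y (Set.mem_insert_of_mem x₀ hy), sub_zero]
    _ ≤ ‖x - y‖ := abs_coord_le_norm n _
    _ < ε := by rwa [← dist_eq_norm]

end c00

theorem no_right_symmetric_CK_c00_general {K : Type*} [TopologicalSpace K] [CompactSpace K]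
    (f : C(K, c00)) (hf : f ≠ 0) :
    ∃ g : C(K, c00), (∀ lam : ℝ, ‖g + lam • f‖ ≥ ‖g‖) ∧
      ¬ (∀ lam : ℝ, ‖f + lam • g‖ ≥ ‖f‖) := by
  obtain ⟨k₀, -⟩ := DFunLike.ne_iff.mp hf
  have hM : 0 < ‖f‖ := norm_pos_iff.mpr hf
  obtain ⟨n, hn₀, hsmall⟩ := c00.exists_coord_eq_zero_and_abs_coord_lt
    (isCompact_range f.continuous).totallyBounded (f k₀) (by positivity : 0 < ‖f‖ / 4)
  have hfk (k : K) : ‖f k‖ ≤ ‖f‖ := f.norm_coe_le_norm k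
  let g := (c00.setCoord n ‖f‖).comp f
  have hg : ‖g‖ ≤ ‖f‖ :=
    (ContinuousMap.norm_le g hM.le).mpr fun k => c00.norm_setCoord_le (hfk k)
  have hgf : BirkhoffOrthogonal g f := by
    refine .of_linearMap ((c00.coord n).comp (ContinuousMap.evalCLM ℝ k₀)).toLinearMap
      (fun z => ?_) ?_ ?_
    · exact (le_abs_self _).trans
        ((c00.abs_coord_le_norm n (z k₀)).trans (z.norm_coe_le_norm k₀))
    · simpa [g, c00.coord_setCoord_self] using hg
    · simpa using hn₀
  have hfg : ‖f + (-1 / 2 : ℝ) • g‖ < ‖f‖ :=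
    calc ‖f + (-1 / 2 : ℝ) • g‖ ≤ 3 / 4 * ‖f‖ :=
          (ContinuousMap.norm_le _ (by positivity)).mpr fun k =>
            c00.norm_add_neg_half_smul_setCoord_le (hfk k) (hsmall _ ⟨k, rfl⟩).le
      _ < ‖f‖ := by linarith
  exact ⟨g, hgf, fun h => (h _).not_gt hfg⟩

/-- `C(K, c₀₀)` has no nonzero right symmetric points. -/
theorem no_right_symmetric_CK_c00 {K : Type*} [TopologicalSpace K] [CompactSpace K]
    [T2Space K] (f : C(K, c00)) (hf : f ≠ 0) :
    ∃ g : C(K, c00), (∀ lam : ℝ, ‖g + lam • f‖ ≥ ‖g‖) ∧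
      ¬ (∀ lam : ℝ, ‖f + lam • g‖ ≥ ‖f‖) :=
  no_right_symmetric_CK_c00_general f hf
end
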